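/- Let n > q ≥ 1 be coprime integers, ζ = exp(2πi/n), and let Γ(n,q) ⊂ GL(2,ℂ) be generated by diag(ζ, ζ^q), acting on ℂ[x,y] by x ↦ ζx, y ↦ ζ^q y. Let a₁,…,a_s be the unique sequence with a_i ≥ 2 and [a₁,…,a_s] = n/(n−q), and let (i_k, j_k), 1 ≤ k ≤ s+2, be defined by (i₁,j₁) = (n,0), (i₂,j₂) = (n−q,1), (i_{k+1}, j_{k+1}) = a_{k-1}·(i_k, j_k) − (i_{k-1}, j_{k-1}). Then the invariant ring ℂ[x,y]^{Γ(n,q)} is generated as a ℂ-algebra by the e = s+2 monomials z_k = x^{i_k} y^{j_k}, k = 1,…,s+2. -/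

import Mathlib

/-- The negative (Hirzebruch–Jung) continued fraction `[a₁,…,a_s] = a₁ − 1/(a₂ − 1/(⋯ − 1/a_s))`
of a list of integers, as an element of `ℚ`; `none` if it is not well defined, i.e. if some
intermediate denominator vanishes (or the list is empty). -/
def ncf : List ℤ → Option ℚ
  | [] => none
  | [a] => some (a : ℚ)
  | a :: b :: rest =>
      match ncf (b :: rest) with
      | none => none
      | some v => if v = 0 then none else some ((a : ℚ) - 1 / v)

/-- The exponent pairs `(i_k, j_k)` of the canonical coordinates `z_k = x^{i_k} y^{j_k}`
(with 0-based index: `seqIJ n q a m = (i_{m+1}, j_{m+1})`), defined by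
`(i₁,j₁) = (n,0)`, `(i₂,j₂) = (n−q,1)` and
`(i_{k+1}, j_{k+1}) = a_{k-1}·(i_k, j_k) − (i_{k-1}, j_{k-1})`,
where `a m` is the 0-based `m`-th entry, i.e. `a_{m+1}`. -/
def seqIJ (n q : ℤ) (a : ℕ → ℤ) : ℕ → ℤ × ℤ
  | 0 => (n, 0)
  | 1 => (n - q, 1)
  | (m + 2) =>
      (a m * (seqIJ n q a (m + 1)).1 - (seqIJ n q a m).1,
       a m * (seqIJ n q a (m + 1)).2 - (seqIJ n q a m).2)


open MvPolynomial

/-- The substitution action of the diagonal matrix `diag(a, b)` on polynomials in two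
variables: `x ↦ a·x`, `y ↦ b·y`. -/
noncomputable def scaleHom (a b : ℂ) :
    MvPolynomial (Fin 2) ℂ →ₐ[ℂ] MvPolynomial (Fin 2) ℂ :=
  aeval ![a • X 0, b • X 1]

/-!
The exponents `(i, j)` of invariant monomials form the lattice `n ∣ i + q j` in the quadrant.
The vectors `P_k = (i_k, j_k)` satisfy `det (P_k, P_{k+1}) = n` and lie in that lattice;
by the continued fraction, `i_k / i_{k+1} = [a_{k+1},…,a_s]`, so `i_k > 0` for `k ≤ s` and
`i_{s+1} = 0`, while `j_k ≥ 0` since all `a_k ≥ 2`. Hence the rays through the `P_k` sweep the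
quadrant from `P_0 = (n, 0)` to `P_{s+1} = (0, j_{s+1})`, every lattice point lies in some cone
spanned by `P_k, P_{k+1}`, and its coordinates there are integral because the cone has
determinant `n` while both determinants `det (P_k, (i, j))` are divisible by `n`.
-/

theorem ncf_cons_cons_eq_some {a b : ℤ} {l : List ℤ} {v : ℚ} :
    ncf (a :: b :: l) = some v ↔ ∃ w, ncf (b :: l) = some w ∧ w ≠ 0 ∧ v = a - 1 / w := by
  simp only [ncf]
  rcases ncf (b :: l) with _ | w
  · simp
  · by_cases hw : w = 0 <;> simp [hw, eq_comm]

theorem one_lt_of_ncf_eq_some :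
    ∀ {l : List ℤ}, (∀ x ∈ l, 2 ≤ x) → ∀ {v : ℚ}, ncf l = some v → 1 < v
  | [], _, _, hv => by simp [ncf] at hv
  | [a], hl, v, hv => by
      have ha : (2 : ℚ) ≤ a := by exact_mod_cast hl a (by simp)
      simp only [ncf, Option.some.injEq] at hv
      linarith
  | a :: b :: l, hl, v, hv => by
      obtain ⟨w, hw, -, rfl⟩ := ncf_cons_cons_eq_some.1 hv
      have hw1 : 1 < w := one_lt_of_ncf_eq_some (fun x hx => hl x (List.mem_cons_of_mem a hx)) hw
      have ha : (2 : ℚ) ≤ a := by exact_mod_cast hl a (by simp)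
      have : 1 / w < 1 := (div_lt_one (by linarith)).2 hw1
      linarith

/-- Along the recurrence, `u_m / u_{m+1} = [a_{m+1},…,a_s]`. -/
theorem ncf_recurrence_pos_and_eq_zero {l : List ℤ} (hl : ∀ x ∈ l, 2 ≤ x) {v : ℚ}
    (hv : ncf l = some v) {u : ℕ → ℤ} (hu : ∀ m, u (m + 2) = l.getD m 0 * u (m + 1) - u m)
    (hu₁ : 0 < u 1) (hu₀ : (u 0 : ℚ) = v * u 1) :
    (∀ m ≤ l.length, 0 < u m) ∧ u (l.length + 1) = 0 := by
  induction l generalizing u v with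
  | nil => simp [ncf] at hv
  | cons b l ih =>
    have hu₁' : (0 : ℚ) < u 1 := by exact_mod_cast hu₁
    have hu₀pos : 0 < u 0 := by
      have : (0 : ℚ) < u 0 := by rw [hu₀]; nlinarith [one_lt_of_ncf_eq_some hl hv]
      exact_mod_cast this
    rcases l with _ | ⟨c, l⟩
    · simp only [ncf, Option.some.injEq] at hv
      subst hv
      refine ⟨fun m hm => ?_, ?_⟩
      · simp only [List.length_singleton] at hm
        interval_cases m <;> assumption
      · have : (u 2 : ℚ) = 0 := by rw [hu 0]; push_cast [List.getD_cons_zero]; linarith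
        exact_mod_cast this
    · obtain ⟨w, hw, hw0, rfl⟩ := ncf_cons_cons_eq_some.1 hv
      have hl' : ∀ x ∈ c :: l, 2 ≤ x := fun x hx => hl x (List.mem_cons_of_mem b hx)
      have hw1 := one_lt_of_ncf_eq_some hl' hw
      have hu₂ : (u 2 : ℚ) = u 1 / w := by
        rw [hu 0]; push_cast [List.getD_cons_zero]; rw [hu₀]; ring
      obtain ⟨hpos, hzero⟩ := ih hl' hw (u := fun m => u (m + 1)) (fun m => hu (m + 1))
        (by have : (0 : ℚ) < u 2 := by rw [hu₂]; positivity
            exact_mod_cast this)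
        (by simp only [hu₂]; field_simp)
      refine ⟨fun m hm => ?_, hzero⟩
      rcases m with _ | m
      · exact hu₀pos
      · exact hpos m (by simpa using hm)

theorem recurrence_nonneg_of_two_le {g u : ℕ → ℤ} {N : ℕ} (hg : ∀ m < N, 2 ≤ g m)
    (hu : ∀ m, u (m + 2) = g m * u (m + 1) - u m) (h₀ : 0 ≤ u 0) (h₀₁ : u 0 ≤ u 1) :
    ∀ m ≤ N + 1, 0 ≤ u m := by
  have hmono : ∀ m ≤ N, 0 ≤ u m ∧ u m ≤ u (m + 1) := by
    intro m hm
    induction m with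
    | zero => exact ⟨h₀, h₀₁⟩
    | succ m ih =>
      obtain ⟨h, h'⟩ := ih (by omega)
      have := hg m (by omega)
      exact ⟨by omega, by rw [hu]; nlinarith⟩
  intro m hm
  rcases Nat.lt_or_ge m (N + 1) with h | h
  · exact (hmono m (by omega)).1
  · obtain ⟨h, h'⟩ := hmono N le_rfl
    rw [show m = N + 1 by omega]
    omega

theorem exists_le_nonneg_succ_nonpos {α : Type*} [LinearOrder α] [Zero α] (d : ℕ → α)
    (h₀ : 0 ≤ d 0) : ∀ {s}, d (s + 1) ≤ 0 → ∃ k ≤ s, 0 ≤ d k ∧ d (k + 1) ≤ 0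
  | 0, hs => ⟨0, le_rfl, h₀, hs⟩
  | s + 1, hs => by
      by_cases h : 0 ≤ d (s + 1)
      · exact ⟨s + 1, le_rfl, h, hs⟩
      · obtain ⟨k, hk, hk'⟩ := exists_le_nonneg_succ_nonpos d h₀ (not_le.1 h).le
        exact ⟨k, hk.trans s.le_succ, hk'⟩

section seqIJ

variable (n q : ℤ) (g : ℕ → ℤ)

theorem dvd_seqIJ : ∀ k, n ∣ (seqIJ n q g k).1 + q * (seqIJ n q g k).2
  | 0 => by simp [seqIJ]
  | 1 => ⟨1, by simp [seqIJ]⟩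
  | m + 2 => by
      obtain ⟨c₁, hc₁⟩ := dvd_seqIJ m
      obtain ⟨c₂, hc₂⟩ := dvd_seqIJ (m + 1)
      exact ⟨g m * c₂ - c₁, by simp only [seqIJ]; linear_combination g m * hc₂ - hc₁⟩

theorem seqIJ_det : ∀ k,
    (seqIJ n q g k).1 * (seqIJ n q g (k + 1)).2 - (seqIJ n q g (k + 1)).1 * (seqIJ n q g k).2 = n
  | 0 => by simp [seqIJ]
  | k + 1 => by
      have h := seqIJ_det k
      simp only [seqIJ]
      linear_combination h

variable {n q g}

theorem exists_seqIJ_combination (hn : 0 < n) {s : ℕ} (hI : (seqIJ n q g (s + 1)).1 = 0)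
    (hJ : 0 ≤ (seqIJ n q g (s + 1)).2) {i j : ℤ} (hi : 0 ≤ i) (hj : 0 ≤ j)
    (hij : n ∣ i + q * j) :
    ∃ k ≤ s, ∃ α β : ℤ, 0 ≤ α ∧ 0 ≤ β ∧
      i = α * (seqIJ n q g k).1 + β * (seqIJ n q g (k + 1)).1 ∧
      j = α * (seqIJ n q g k).2 + β * (seqIJ n q g (k + 1)).2 := by
  set d : ℕ → ℤ := fun m => (seqIJ n q g m).1 * j - (seqIJ n q g m).2 * i with hd
  obtain ⟨k, hk, hdk, hdk₁⟩ := exists_le_nonneg_succ_nonpos d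
    (by simp only [hd, seqIJ]; nlinarith) (show d (s + 1) ≤ 0 by simp only [hd, hI]; nlinarith)
  have hdvd : ∀ m, n ∣ d m := by
    obtain ⟨e, he⟩ := hij
    intro m
    obtain ⟨c, hc⟩ := dvd_seqIJ n q g m
    exact ⟨c * j - (seqIJ n q g m).2 * e, by
      simp only [hd]; linear_combination j * hc - (seqIJ n q g m).2 * he⟩
  obtain ⟨β, hβ⟩ := hdvd k
  obtain ⟨γ, hγ⟩ := hdvd (k + 1)
  simp only [hd] at hdk hdk₁ hβ hγ
  have hdet := seqIJ_det n q g k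
  refine ⟨k, hk, -γ, β, by nlinarith, by nlinarith, ?_, ?_⟩
  · refine mul_left_cancel₀ hn.ne' ?_
    linear_combination (seqIJ n q g (k + 1)).1 * hβ - (seqIJ n q g k).1 * hγ - i * hdet
  · refine mul_left_cancel₀ hn.ne' ?_
    linear_combination (seqIJ n q g (k + 1)).2 * hβ - (seqIJ n q g k).2 * hγ - j * hdet

end seqIJ

section continuedFraction

variable {n q : ℤ} {a : List ℤ} (ha2 : ∀ x ∈ a, 2 ≤ x)
include ha2

theorem seqIJ_snd_nonneg : ∀ m ≤ a.length + 1, 0 ≤ (seqIJ n q (a.getD · 0) m).2 :=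
  recurrence_nonneg_of_two_le
    (fun m hm => by rw [List.getD_eq_getElem _ _ hm]; exact ha2 _ (List.getElem_mem hm))
    (fun _ => rfl) le_rfl zero_le_one

variable (hqn : q < n) (hval : ncf a = some ((n : ℚ) / ((n : ℚ) - (q : ℚ))))
include hqn hval

theorem seqIJ_fst_pos_and_eq_zero :
    (∀ m ≤ a.length, 0 < (seqIJ n q (a.getD · 0) m).1) ∧
      (seqIJ n q (a.getD · 0) (a.length + 1)).1 = 0 :=
  ncf_recurrence_pos_and_eq_zero ha2 hval (fun _ => rfl) (by simp only [seqIJ]; omega) (by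
    have : (n : ℚ) - q ≠ 0 := sub_ne_zero.2 (by exact_mod_cast hqn.ne')
    simp only [seqIJ]; push_cast; field_simp)

theorem seqIJ_fst_nonneg : ∀ m ≤ a.length + 1, 0 ≤ (seqIJ n q (a.getD · 0) m).1 := by
  obtain ⟨hpos, hzero⟩ := seqIJ_fst_pos_and_eq_zero ha2 hqn hval
  intro m hm
  rcases Nat.lt_or_ge m (a.length + 1) with h | h
  · exact (hpos m (by omega)).le
  · rw [show m = a.length + 1 by omega, hzero]

theorem dvd_seqIJ_toNat {k : ℕ} (hk : k ≤ a.length + 1) :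
    n ∣ ((seqIJ n q (a.getD · 0) k).1.toNat : ℤ) + q * (seqIJ n q (a.getD · 0) k).2.toNat := by
  rw [Int.toNat_of_nonneg (seqIJ_fst_nonneg ha2 hqn hval k hk),
    Int.toNat_of_nonneg (seqIJ_snd_nonneg ha2 k hk)]
  exact dvd_seqIJ n q _ k

theorem exists_seqIJ_toNat_combination {i j : ℕ} (hij : n ∣ (i : ℤ) + q * j) :
    ∃ k ≤ a.length, ∃ α β : ℕ,
      i = α * (seqIJ n q (a.getD · 0) k).1.toNat
        + β * (seqIJ n q (a.getD · 0) (k + 1)).1.toNat ∧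
      j = α * (seqIJ n q (a.getD · 0) k).2.toNat
        + β * (seqIJ n q (a.getD · 0) (k + 1)).2.toNat := by
  obtain ⟨hpos, hzero⟩ := seqIJ_fst_pos_and_eq_zero ha2 hqn hval
  have hI := seqIJ_fst_nonneg ha2 hqn hval
  have hJ := seqIJ_snd_nonneg (n := n) (q := q) ha2
  have hn : 0 < n := by simpa [seqIJ] using hpos 0 (Nat.zero_le _)
  obtain ⟨k, hk, α, β, hα, hβ, hi, hj⟩ := exists_seqIJ_combination hn hzero (hJ _ le_rfl)
    (Nat.cast_nonneg i) (Nat.cast_nonneg j) hij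
  lift α to ℕ using hα
  lift β to ℕ using hβ
  refine ⟨k, hk, α, β, ?_, ?_⟩
  · zify
    rwa [Int.toNat_of_nonneg (hI k (by omega)), Int.toNat_of_nonneg (hI (k + 1) (by omega))]
  · zify
    rwa [Int.toNat_of_nonneg (hJ k (by omega)), Int.toNat_of_nonneg (hJ (k + 1) (by omega))]

end continuedFraction

theorem scaleHom_monomial (u v : ℂ) (d : Fin 2 →₀ ℕ) (c : ℂ) :
    scaleHom u v (monomial d c) = monomial d (u ^ d 0 * v ^ d 1 * c) := by
  rw [scaleHom, aeval_monomial, monomial_eq, Finsupp.prod_fintype _ _ (fun _ => pow_zero _),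
    Finsupp.prod_fintype _ _ (fun _ => pow_zero _), Fin.prod_univ_two, Fin.prod_univ_two]
  simp only [Matrix.cons_val_zero, Matrix.cons_val_one, algebraMap_eq, smul_eq_C_mul, mul_pow,
    map_mul, map_pow]
  ring

theorem coeff_scaleHom (u v : ℂ) (f : MvPolynomial (Fin 2) ℂ) (d : Fin 2 →₀ ℕ) :
    coeff d (scaleHom u v f) = u ^ d 0 * v ^ d 1 * coeff d f := by
  induction f using MvPolynomial.induction_on' with
  | monomial e c =>
    rw [scaleHom_monomial, coeff_monomial, coeff_monomial]
    split_ifs with h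
    · rw [h]
    · rw [mul_zero]
  | add f g hf hg => simp only [map_add, coeff_add, hf, hg, mul_add]

theorem scaleHom_eq_self_iff {u v : ℂ} {f : MvPolynomial (Fin 2) ℂ} :
    scaleHom u v f = f ↔ ∀ d ∈ f.support, u ^ d 0 * v ^ d 1 = 1 := by
  simp only [MvPolynomial.ext_iff, coeff_scaleHom, mem_support_iff]
  refine forall_congr' fun d => ?_
  by_cases hc : coeff d f = 0
  · simp [hc]
  · simp [hc, mul_eq_right₀ hc]

noncomputable def scaleInvariants (ζ : ℂ) (q : ℤ) : Subalgebra ℂ (MvPolynomial (Fin 2) ℂ) :=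
  ⨅ k : ℤ, AlgHom.equalizer (scaleHom (ζ ^ k) ((ζ ^ q) ^ k)) (AlgHom.id ℂ _)

theorem mem_scaleInvariants {ζ : ℂ} {q : ℤ} {f : MvPolynomial (Fin 2) ℂ} :
    f ∈ scaleInvariants ζ q ↔ ∀ k : ℤ, scaleHom (ζ ^ k) ((ζ ^ q) ^ k) f = f := by
  simp [scaleInvariants, Algebra.mem_iInf, AlgHom.mem_equalizer]

theorem mem_scaleInvariants_iff_dvd {ζ : ℂ} {N : ℕ} (hζ : IsPrimitiveRoot ζ N) (hN : N ≠ 0)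
    (q : ℤ) {f : MvPolynomial (Fin 2) ℂ} :
    f ∈ scaleInvariants ζ q ↔ ∀ d ∈ f.support, (N : ℤ) ∣ d 0 + q * d 1 := by
  have hζ₀ : ζ ≠ 0 := hζ.ne_zero hN
  have hpow : ∀ (k : ℤ) (d : Fin 2 →₀ ℕ),
      (ζ ^ k) ^ d 0 * ((ζ ^ q) ^ k) ^ d 1 = (ζ ^ ((d 0 : ℤ) + q * d 1)) ^ k := by
    intro k d
    rw [← zpow_natCast, ← zpow_natCast, ← zpow_mul, ← zpow_mul, ← zpow_mul, ← zpow_mul,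
      ← zpow_add₀ hζ₀]
    ring_nf
  simp only [mem_scaleInvariants, scaleHom_eq_self_iff, hpow, ← hζ.zpow_eq_one_iff_dvd]
  exact ⟨fun h d hd => by simpa using h 1 d hd, fun h k d hd => by rw [h d hd, one_zpow]⟩

theorem support_X_zero_pow_mul_X_one_pow (p r : ℕ) :
    (X 0 ^ p * X 1 ^ r : MvPolynomial (Fin 2) ℂ).support =
      {Finsupp.single 0 p + Finsupp.single 1 r} := by
  rw [X_pow_eq_monomial, X_pow_eq_monomial, monomial_mul, mul_one, support_monomial,
    if_neg one_ne_zero]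

theorem monomial_mem_of_eq_add_mul {R : Type*} [CommSemiring R]
    {A : Subalgebra R (MvPolynomial (Fin 2) R)} {p₁ r₁ p₂ r₂ : ℕ}
    (h₁ : X 0 ^ p₁ * X 1 ^ r₁ ∈ A) (h₂ : X 0 ^ p₂ * X 1 ^ r₂ ∈ A) {d : Fin 2 →₀ ℕ} {α β : ℕ}
    (hd₀ : d 0 = α * p₁ + β * p₂) (hd₁ : d 1 = α * r₁ + β * r₂) (c : R) :
    monomial d c ∈ A := by
  have : monomial d c = C c * ((X 0 ^ p₁ * X 1 ^ r₁) ^ α * (X 0 ^ p₂ * X 1 ^ r₂) ^ β) := by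
    rw [monomial_eq, Finsupp.prod_fintype _ _ (fun _ => pow_zero _), Fin.prod_univ_two, hd₀, hd₁]
    ring
  rw [this, ← algebraMap_eq]
  exact mul_mem (A.algebraMap_mem c) (mul_mem (pow_mem h₁ α) (pow_mem h₂ β))

theorem stmt13_general (n q : ℤ) (hqn : q < n)
    (ζ : ℂ) (hζ : ζ = Complex.exp (2 * Real.pi * Complex.I / (n : ℂ)))
    (a : List ℤ) (ha2 : ∀ x ∈ a, 2 ≤ x)
    (hval : ncf a = some ((n : ℚ) / ((n : ℚ) - (q : ℚ)))) :
    ∀ f : MvPolynomial (Fin 2) ℂ,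
      (∀ k : ℤ, scaleHom (ζ ^ k) ((ζ ^ q) ^ k) f = f) ↔
        f ∈ Algebra.adjoin ℂ
          {m : MvPolynomial (Fin 2) ℂ |
            ∃ k ≤ a.length + 1,
              m = X 0 ^ (seqIJ n q (fun t => a.getD t 0) k).1.toNat *
                    X 1 ^ (seqIJ n q (fun t => a.getD t 0) k).2.toNat} := by
  have hn : 0 < n := by
    simpa [seqIJ] using (seqIJ_fst_pos_and_eq_zero ha2 hqn hval).1 0 (Nat.zero_le _)
  lift n to ℕ using hn.le
  have hn₀ : n ≠ 0 := by omega
  have hprim : IsPrimitiveRoot ζ n := by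
    rw [hζ]
    exact_mod_cast Complex.isPrimitiveRoot_exp n hn₀
  suffices scaleInvariants ζ q = Algebra.adjoin ℂ _ from
    fun f => by rw [← mem_scaleInvariants, this]
  refine le_antisymm (fun f hf => ?_) (Algebra.adjoin_le ?_)
  · rw [mem_scaleInvariants_iff_dvd hprim hn₀] at hf
    rw [f.as_sum]
    refine Subalgebra.sum_mem _ fun d hd => ?_
    obtain ⟨k, hk, α, β, hd₀, hd₁⟩ := exists_seqIJ_toNat_combination ha2 hqn hval (hf d hd)
    refine monomial_mem_of_eq_add_mul ?_ ?_ hd₀ hd₁ _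
    · exact Algebra.subset_adjoin ⟨k, by omega, rfl⟩
    · exact Algebra.subset_adjoin ⟨k + 1, by omega, rfl⟩
  · rintro _ ⟨k, hk, rfl⟩
    rw [SetLike.mem_coe, mem_scaleInvariants_iff_dvd hprim hn₀, support_X_zero_pow_mul_X_one_pow]
    simpa using dvd_seqIJ_toNat ha2 hqn hval hk

/-- The invariant ring `ℂ[x,y]^{Γ(n,q)}` is generated as a `ℂ`-algebra by the `e = s + 2`
monomials `z_k = x^{i_k} y^{j_k}`. -/
theorem stmt13 (n q : ℤ) (hq : 1 ≤ q) (hqn : q < n) (hco : Int.gcd n q = 1)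
    (ζ : ℂ) (hζ : ζ = Complex.exp (2 * Real.pi * Complex.I / (n : ℂ)))
    (a : List ℤ) (ha2 : ∀ x ∈ a, 2 ≤ x)
    (hval : ncf a = some ((n : ℚ) / ((n : ℚ) - (q : ℚ)))) :
    ∀ f : MvPolynomial (Fin 2) ℂ,
      (∀ k : ℤ, scaleHom (ζ ^ k) ((ζ ^ q) ^ k) f = f) ↔
        f ∈ Algebra.adjoin ℂ
          {m : MvPolynomial (Fin 2) ℂ |
            ∃ k ≤ a.length + 1,
              m = X 0 ^ (seqIJ n q (fun t => a.getD t 0) k).1.toNat *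
                    X 1 ^ (seqIJ n q (fun t => a.getD t 0) k).2.toNat} :=
  stmt13_general n q hqn ζ hζ a ha2 hval
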